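/- arXiv:math/0010062 — 2 statements merged into one kernel-verified Lean document; each statement's English description precedes it below -/
import Mathlib

section
/- Let X ⊆ ℝ be a measurable set such that to each x ∈ X there is associated a sequence D_n(x) of nested intervals converging to x (x ∈ D_{n+1}(x) ⊆ D_n(x) and |D_n(x)| → 0), with the property that for all x₁, x₂ ∈ X and all n, the intervals D_n(x₁) and D_n(x₂) are either equal or disjoint. Let Q_n be measurable subsets of ℝ and set q_n(x) = |Q_n ∩ D_n(x)|/|D_n(x)|. Let Y be the set of all x ∈ X which belong to at most finitely many Q_n. If Σ_n q_n(x) is finite for almost every x ∈ X, then |Y| = |X|. -/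
open Set Filter MeasureTheory Topology
open scoped ENNReal

/-!
Write `q n` for the cell ratios and `S M = {x ∈ X | ∑ n, q n x ≤ M}`; it suffices that almost
every point of each `S M` lies in finitely many `Q n`. By Lebesgue's density theorem, for almost
every `x ∈ S M` the cells `D n x` are eventually at least half filled by `S M`. On such a cell `I`,
`|Q n ∩ I| = q n |I| ≤ 2 ∫_{S M ∩ I} q n`, and since the cells of one level are disjoint, summing
over cells and then over `n` bounds `∑ n, |Q n ∩ T|` by `2 ∫_{S M ∩ U} ∑ n, q n ≤ 2 M |U|`, where
`T` is the set of such points whose cells stay in a bounded window `U`. Borel–Cantelli concludes.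
-/

section Cells

variable {α : Type*}

theorem pairwiseDisjoint_image_of_eq_or_disjoint {X : Set α} {C : α → Set α}
    (h : ∀ x ∈ X, ∀ y ∈ X, C x = C y ∨ Disjoint (C x) (C y)) : (C '' X).PairwiseDisjoint id := by
  rintro _ ⟨x, hx, rfl⟩ _ ⟨y, hy, rfl⟩ hne
  exact (h x hx y hy).resolve_left hne

variable [MeasurableSpace α]

structure IsCellMap (X : Set α) (C : α → Set α) : Prop where
  mem_self : ∀ x ∈ X, x ∈ C x
  eq_or_disjoint : ∀ x ∈ X, ∀ y ∈ X, C x = C y ∨ Disjoint (C x) (C y)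
  countable : (C '' X).Countable
  measurableSet : ∀ x ∈ X, MeasurableSet (C x)

/-- The paper's `q_n(x)` for `C = D n` and `Q = Q n`. -/
noncomputable def cellRatio (μ : Measure α) (X : Set α) (C : α → Set α) (Q : Set α) : α → ℝ≥0∞ :=
  X.indicator fun x => μ (Q ∩ C x) / μ (C x)

namespace IsCellMap

variable {μ : Measure α} {X S T U Q : Set α} {C : α → Set α}

theorem eq_of_mem (hC : IsCellMap X C) {x y : α} (hx : x ∈ X) (hy : y ∈ X) (hxy : x ∈ C y) :
    C x = C y :=
  (hC.eq_or_disjoint x hx y hy).resolve_right fun h => h.notMem_of_mem_left (hC.mem_self x hx) hxy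

theorem cellRatio_eq_of_mem (hC : IsCellMap X C) {x y : α} (hx : x ∈ X) (hy : y ∈ X)
    (hxy : x ∈ C y) : cellRatio μ X C Q x = μ (Q ∩ C y) / μ (C y) := by
  rw [cellRatio, indicator_of_mem hx, hC.eq_of_mem hx hy hxy]

theorem measurable_cellRatio (hC : IsCellMap X C) (hX : MeasurableSet X) :
    Measurable (cellRatio μ X C Q) := by
  have := hC.countable.to_subtype
  have hsum : cellRatio μ X C Q =
      fun x => ∑' I : C '' X, (X ∩ I).indicator (fun _ => μ (Q ∩ I) / μ I) x := by
    ext x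
    by_cases hx : x ∈ X
    · rw [tsum_eq_single (⟨C x, mem_image_of_mem C hx⟩ : C '' X),
        indicator_of_mem (show x ∈ X ∩ C x from ⟨hx, hC.mem_self x hx⟩), cellRatio,
        indicator_of_mem hx]
      rintro ⟨_, y, hy, rfl⟩ hne
      exact indicator_of_notMem (fun hxy => hne (Subtype.ext (hC.eq_of_mem hx hy hxy.2).symm)) _
    · simp [cellRatio, hx]
  rw [hsum]
  refine Measurable.tsum fun ⟨_, y, hy, rfl⟩ =>
    measurable_const.indicator (hX.inter (hC.measurableSet y hy))

theorem setLIntegral_cellRatio (hC : IsCellMap X C) (hS : S ⊆ X) (hSm : MeasurableSet S) {y : α}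
    (hy : y ∈ X) :
    ∫⁻ x in S ∩ C y, cellRatio μ X C Q x ∂μ = μ (Q ∩ C y) / μ (C y) * μ (S ∩ C y) := by
  rw [setLIntegral_congr_fun (hSm.inter (hC.measurableSet y hy))
    fun x hx => hC.cellRatio_eq_of_mem (hS hx.1) hy hx.2, setLIntegral_const]

theorem measure_inter_le_mul_setLIntegral (hC : IsCellMap X C) (hpos : ∀ x ∈ X, μ (C x) ≠ 0)
    (hfin : ∀ x ∈ X, μ (C x) ≠ ∞) (hS : S ⊆ X) (hSm : MeasurableSet S) (hT : T ⊆ X)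
    {c : ℝ≥0∞} (hdense : ∀ y ∈ T, μ (C y) ≤ c * μ (S ∩ C y)) (hU : ∀ y ∈ T, C y ⊆ U) :
    μ (Q ∩ T) ≤ c * ∫⁻ x in S ∩ U, cellRatio μ X C Q x ∂μ := by
  have hcount : (C '' T).Countable := hC.countable.mono (image_mono hT)
  calc μ (Q ∩ T) ≤ μ (⋃ I ∈ C '' T, Q ∩ I) := measure_mono fun x hx =>
        mem_biUnion (mem_image_of_mem C hx.2) ⟨hx.1, hC.mem_self x (hT hx.2)⟩
    _ ≤ ∑' I : C '' T, μ (Q ∩ I) := measure_biUnion_le μ hcount _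
    _ ≤ ∑' I : C '' T, c * ∫⁻ x in S ∩ I, cellRatio μ X C Q x ∂μ := by
      refine ENNReal.tsum_le_tsum fun ⟨_, y, hy, rfl⟩ => ?_
      rw [hC.setLIntegral_cellRatio hS hSm (hT hy)]
      calc μ (Q ∩ C y) = μ (Q ∩ C y) / μ (C y) * μ (C y) :=
            (ENNReal.div_mul_cancel (hpos y (hT hy)) (hfin y (hT hy))).symm
        _ ≤ μ (Q ∩ C y) / μ (C y) * (c * μ (S ∩ C y)) := by gcongr; exact hdense y hy
        _ = c * (μ (Q ∩ C y) / μ (C y) * μ (S ∩ C y)) := by ring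
    _ = c * ∫⁻ x in ⋃ I ∈ C '' T, S ∩ I, cellRatio μ X C Q x ∂μ := by
      rw [lintegral_biUnion hcount, ENNReal.tsum_mul_left]
      · rintro _ ⟨y, hy, rfl⟩
        exact hSm.inter (hC.measurableSet y (hT hy))
      · exact ((pairwiseDisjoint_image_of_eq_or_disjoint hC.eq_or_disjoint).subset
          (image_mono hT)).mono fun I => inter_subset_right
    _ ≤ c * ∫⁻ x in S ∩ U, cellRatio μ X C Q x ∂μ := by
      gcongr
      refine iUnion₂_subset ?_
      rintro _ ⟨y, hy, rfl⟩
      exact inter_subset_inter_right S (hU y hy)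

end IsCellMap

variable {μ : Measure α} {X S T U : Set α} {C : ℕ → α → Set α} {Q : ℕ → Set α}

theorem tsum_cellRatio_ne_top {x : α} (hx : x ∈ X) (hpos : ∀ n, μ (C n x) ≠ 0)
    (hfin : ∀ n, μ (C n x) ≠ ∞)
    (hsum : Summable fun n => (μ (Q n ∩ C n x)).toReal / (μ (C n x)).toReal) :
    ∑' n, cellRatio μ X (C n) (Q n) x ≠ ∞ := by
  have hratio : ∀ n, cellRatio μ X (C n) (Q n) x = μ (Q n ∩ C n x) / μ (C n x) := fun n =>
    indicator_of_mem hx _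
  have hne : ∀ n, μ (Q n ∩ C n x) / μ (C n x) ≠ ∞ := fun n =>
    ENNReal.div_ne_top (measure_ne_top_of_subset inter_subset_right (hfin n)) (hpos n)
  have hofReal : ∑' n, cellRatio μ X (C n) (Q n) x =
      ENNReal.ofReal (∑' n, (μ (Q n ∩ C n x)).toReal / (μ (C n x)).toReal) := by
    rw [ENNReal.ofReal_tsum_of_nonneg (fun n => by positivity) hsum]
    refine tsum_congr fun n => ?_
    rw [hratio, ← ENNReal.toReal_div, ENNReal.ofReal_toReal (hne n)]
  exact hofReal ▸ ENNReal.ofReal_ne_top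

/-- Borel–Cantelli, with `∑ n ≥ N, μ (Q n ∩ T) ≤ c * ∫⁻ x in S ∩ U, ∑ n, q n x ≤ c * M * μ U`. -/
theorem ae_finite_setOf_mem_of_uniformly_dense (hC : ∀ n, IsCellMap X (C n))
    (hX : MeasurableSet X) (hpos : ∀ n, ∀ x ∈ X, μ (C n x) ≠ 0)
    (hfin : ∀ n, ∀ x ∈ X, μ (C n x) ≠ ∞) (hS : S ⊆ X) (hSm : MeasurableSet S) {M : ℝ≥0∞}
    (hM : M ≠ ∞) (hSM : ∀ x ∈ S, ∑' n, cellRatio μ X (C n) (Q n) x ≤ M) (hU : μ U ≠ ∞)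
    (hT : T ⊆ X) {c : ℝ≥0∞} (hc : c ≠ ∞) (N : ℕ)
    (hdense : ∀ y ∈ T, ∀ n ≥ N, μ (C n y) ≤ c * μ (S ∩ C n y) ∧ C n y ⊆ U) :
    ∀ᵐ x ∂μ, x ∈ T → {n | x ∈ Q n}.Finite := by
  set s : ℕ → Set α := fun n => if N ≤ n then Q n ∩ T else ∅
  have hs : ∑' n, μ (s n) ≠ ∞ := by
    refine ne_top_of_le_ne_top (b := c * (M * μ U)) (by finiteness) ?_
    calc ∑' n, μ (s n) ≤ ∑' n, c * ∫⁻ x in S ∩ U, cellRatio μ X (C n) (Q n) x ∂μ := by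
          refine ENNReal.tsum_le_tsum fun n => ?_
          by_cases hn : N ≤ n
          · simp only [s, if_pos hn]
            exact (hC n).measure_inter_le_mul_setLIntegral (hpos n) (hfin n) hS hSm hT
              (fun y hy => (hdense y hy n hn).1) fun y hy => (hdense y hy n hn).2
          · simp [s, hn]
      _ = c * ∫⁻ x in S ∩ U, ∑' n, cellRatio μ X (C n) (Q n) x ∂μ := by
          rw [ENNReal.tsum_mul_left,
            lintegral_tsum fun n => ((hC n).measurable_cellRatio hX).aemeasurable]
      _ ≤ c * ∫⁻ _ in S ∩ U, M ∂μ := by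
          gcongr c * ?_
          exact setLIntegral_mono measurable_const fun x hx => hSM x hx.1
      _ ≤ c * (M * μ U) := by
          rw [setLIntegral_const]
          gcongr
          exact inter_subset_right
  filter_upwards [ae_eventually_notMem hs] with x hx hxT
  have hQ : ∀ᶠ n in cofinite, x ∉ Q n := by
    rw [Nat.cofinite_eq_atTop]
    filter_upwards [hx, eventually_ge_atTop N] with n hn hNn hxQ
    exact hn (by simp only [s, if_pos hNn]; exact ⟨hxQ, hxT⟩)
  simpa using eventually_cofinite.1 hQ

end Cells

def IsNondegenerateInterval (s : Set ℝ) : Prop :=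
  ∃ u w : ℝ, u < w ∧ Ioo u w ⊆ s ∧ s ⊆ Icc u w

theorem ae_eq_Icc_of_Ioo_subset_of_subset_Icc {s : Set ℝ} {u w : ℝ} (h₁ : Ioo u w ⊆ s)
    (h₂ : s ⊆ Icc u w) : s =ᵐ[volume] Icc u w :=
  h₂.eventuallyLE.antisymm (Ioo_ae_eq_Icc.symm.le.trans h₁.eventuallyLE)

namespace IsNondegenerateInterval

variable {s : Set ℝ}

theorem measurableSet (hs : IsNondegenerateInterval s) : MeasurableSet s := by
  obtain ⟨u, w, huw, h₁, h₂⟩ := hs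
  have hends : s \ Ioo u w ⊆ {u, w} := Icc_sdiff_Ioo_same huw.le ▸ sdiff_subset_sdiff_left h₂
  rw [← union_sdiff_cancel h₁]
  exact measurableSet_Ioo.union ((toFinite _).subset hends).measurableSet

theorem volume_pos (hs : IsNondegenerateInterval s) : 0 < volume s := by
  obtain ⟨u, w, huw, h₁, -⟩ := hs
  exact (Real.volume_Ioo ▸ ENNReal.ofReal_pos.2 (sub_pos.2 huw)).trans_le (measure_mono h₁)

theorem volume_ne_top (hs : IsNondegenerateInterval s) : volume s ≠ ∞ := by
  obtain ⟨u, w, -, -, h₂⟩ := hs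
  exact measure_ne_top_of_subset h₂ measure_Icc_lt_top.ne

theorem interior_nonempty (hs : IsNondegenerateInterval s) : (interior s).Nonempty := by
  obtain ⟨u, w, huw, h₁, -⟩ := hs
  exact (nonempty_Ioo.2 huw).mono (interior_maximal h₁ isOpen_Ioo)

theorem subset_Icc_of_volume_le (hs : IsNondegenerateInterval s) {x r : ℝ} (hx : x ∈ s)
    (hr : volume s ≤ ENNReal.ofReal r) : s ⊆ Icc (x - r) (x + r) := by
  obtain ⟨u, w, huw, h₁, h₂⟩ := hs
  rw [measure_congr (ae_eq_Icc_of_Ioo_subset_of_subset_Icc h₁ h₂), Real.volume_Icc,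
    ENNReal.ofReal_le_ofReal_iff'] at hr
  have hxuw := h₂ hx
  refine h₂.trans (Icc_subset_Icc ?_ ?_) <;> rcases hr with hr | hr <;>
    linarith [hxuw.1, hxuw.2]

end IsNondegenerateInterval

theorem isCellMap_of_isNondegenerateInterval {X : Set ℝ} {C : ℝ → Set ℝ}
    (hint : ∀ x ∈ X, IsNondegenerateInterval (C x)) (hmem : ∀ x ∈ X, x ∈ C x)
    (hdisj : ∀ x ∈ X, ∀ y ∈ X, C x = C y ∨ Disjoint (C x) (C y)) : IsCellMap X C where
  mem_self := hmem
  eq_or_disjoint := hdisj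
  countable := (pairwiseDisjoint_image_of_eq_or_disjoint hdisj).countable_of_nonempty_interior
    fun _ ⟨x, hx, hCx⟩ => hCx ▸ (hint x hx).interior_nonempty
  measurableSet x hx := (hint x hx).measurableSet

theorem ae_tendsto_measure_inter_div_of_isNondegenerateInterval (S : Set ℝ) {ι : Type*}
    {l : Filter ι} :
    ∀ᵐ x ∂volume.restrict S, ∀ I : ι → Set ℝ, (∀ j, IsNondegenerateInterval (I j)) →
      (∀ j, x ∈ I j) → Tendsto (fun j => volume (I j)) l (𝓝 0) →
      Tendsto (fun j => volume (S ∩ I j) / volume (I j)) l (𝓝 1) := by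
  filter_upwards [IsUnifLocDoublingMeasure.ae_tendsto_measure_inter_div volume S 1]
    with x hx I hI hxI hI0
  choose u w huw h₁ h₂ using hI
  have hae : ∀ j, I j =ᵐ[volume] Icc (u j) (w j) := fun j =>
    ae_eq_Icc_of_Ioo_subset_of_subset_Icc (h₁ j) (h₂ j)
  have hball : ∀ j, Metric.closedBall ((u j + w j) / 2) ((w j - u j) / 2) = Icc (u j) (w j) :=
    fun j => by rw [Real.closedBall_eq_Icc]; congr 1 <;> ring
  have hlen : Tendsto (fun j => (w j - u j) / 2) l (𝓝[>] 0) := by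
    refine tendsto_nhdsWithin_of_tendsto_nhds_of_eventually_within _ ?_
      (Eventually.of_forall fun j => half_pos (sub_pos.2 (huw j)))
    have := ((ENNReal.tendsto_toReal ENNReal.zero_ne_top).comp hI0).div_const 2
    simp_rw [Function.comp_def, measure_congr (hae _), Real.volume_Icc,
      ENNReal.toReal_ofReal (sub_nonneg.2 (huw _).le)] at this
    simpa using this
  refine (hx (fun j => (u j + w j) / 2) _ hlen (Eventually.of_forall fun j => ?_)).congr
    fun j => ?_
  · rw [one_mul, hball]
    exact h₂ j (hxI j)
  · rw [hball, measure_congr (hae j), measure_congr ((ae_eq_refl S).inter (hae j))]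

theorem ae_eventually_volume_le_two_mul_volume_inter (S : Set ℝ) :
    ∀ᵐ x ∂volume.restrict S, ∀ I : ℕ → Set ℝ, (∀ n, IsNondegenerateInterval (I n)) →
      (∀ n, x ∈ I n) → Tendsto (fun n => volume (I n)) atTop (𝓝 0) →
      ∀ᶠ n in atTop, volume (I n) ≤ 2 * volume (S ∩ I n) := by
  filter_upwards [ae_tendsto_measure_inter_div_of_isNondegenerateInterval S] with x hx I hI hxI hI0
  filter_upwards [(hx I hI hxI hI0).eventually
    (eventually_ge_nhds (ENNReal.half_lt_self one_ne_zero ENNReal.one_ne_top))] with n hn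
  rw [ENNReal.le_div_iff_mul_le (Or.inl (hI n).volume_pos.ne') (Or.inl (hI n).volume_ne_top)] at hn
  calc volume (I n) = 2 * (1 / 2 * volume (I n)) := by
        rw [← mul_assoc, ENNReal.mul_div_cancel two_ne_zero ENNReal.ofNat_ne_top, one_mul]
    _ ≤ 2 * volume (S ∩ I n) := by gcongr

theorem ae_finite_setOf_mem_of_tsum_cellRatio_le {X : Set ℝ} (hX : MeasurableSet X)
    {D : ℕ → ℝ → Set ℝ} (hcell : ∀ n, IsCellMap X (D n))
    (hDint : ∀ x ∈ X, ∀ n, IsNondegenerateInterval (D n x))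
    (hDconv : ∀ x ∈ X, Tendsto (fun n => volume (D n x)) atTop (𝓝 0)) (Q : ℕ → Set ℝ)
    {M : ℝ≥0∞} (hM : M ≠ ∞) :
    ∀ᵐ x, x ∈ X → ∑' n, cellRatio volume X (D n) (Q n) x ≤ M → {n | x ∈ Q n}.Finite := by
  set S := {x ∈ X | ∑' n, cellRatio volume X (D n) (Q n) x ≤ M}
  have hSm : MeasurableSet S := hX.inter <| measurableSet_le
    (Measurable.tsum fun n => (hcell n).measurable_cellRatio hX) measurable_const
  set T : ℕ → ℕ → Set ℝ := fun N K => {y ∈ X | ∀ n ≥ N,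
    volume (D n y) ≤ 2 * volume (S ∩ D n y) ∧ D n y ⊆ Icc (-K : ℝ) K}
  have hT : ∀ N K, ∀ᵐ x, x ∈ T N K → {n | x ∈ Q n}.Finite := fun N K =>
    ae_finite_setOf_mem_of_uniformly_dense hcell hX (fun n x hx => (hDint x hx n).volume_pos.ne')
      (fun n x hx => (hDint x hx n).volume_ne_top) (sep_subset X _) hSm hM (fun x hx => hx.2)
      (by simp [Real.volume_Icc]) (sep_subset X _) ENNReal.ofNat_ne_top N fun y hy => hy.2
  have hdense : ∀ᵐ x ∂volume.restrict S,
      ∀ᶠ n in atTop, volume (D n x) ≤ 2 * volume (S ∩ D n x) := by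
    filter_upwards [ae_eventually_volume_le_two_mul_volume_inter S, ae_restrict_mem hSm]
      with x hx hxS
    exact hx _ (hDint x hxS.1) (fun n => (hcell n).mem_self x hxS.1) (hDconv x hxS.1)
  filter_upwards [ae_all_iff.2 fun N => ae_all_iff.2 (hT N), (ae_restrict_iff' hSm).1 hdense]
    with x hxT hxdense hxX hxM
  obtain ⟨N, hN⟩ := eventually_atTop.1 ((hxdense ⟨hxX, hxM⟩).and
    ((hDconv x hxX).eventually (eventually_le_nhds zero_lt_one)))
  obtain ⟨K, hK⟩ := exists_nat_ge (|x| + 1)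
  refine hxT N K ⟨hxX, fun n hn => ⟨(hN n hn).1, ?_⟩⟩
  refine ((hDint x hxX n).subset_Icc_of_volume_le ((hcell n).mem_self x hxX)
    ((hN n hn).2.trans_eq ENNReal.ofReal_one.symm)).trans (Icc_subset_Icc ?_ ?_) <;>
    linarith [abs_le.1 (show |x| ≤ K - 1 by linarith)]

theorem measure_theoretical_lemma_general (X : Set ℝ) (hX : MeasurableSet X)
    (D : ℕ → ℝ → Set ℝ)
    (hDint : ∀ x ∈ X, ∀ n, ∃ u w : ℝ, u < w ∧ Ioo u w ⊆ D n x ∧ D n x ⊆ Icc u w)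
    (hDmem : ∀ x ∈ X, ∀ n, x ∈ D n x)
    (hDconv : ∀ x ∈ X, Tendsto (fun n => volume (D n x)) atTop (𝓝 0))
    (hDdisj : ∀ x₁ ∈ X, ∀ x₂ ∈ X, ∀ n, D n x₁ = D n x₂ ∨ Disjoint (D n x₁) (D n x₂))
    (Q : ℕ → Set ℝ)
    (hsum : ∀ᵐ x ∂(volume.restrict X),
      Summable (fun n => (volume (Q n ∩ D n x)).toReal / (volume (D n x)).toReal)) :
    volume {x | x ∈ X ∧ {n : ℕ | x ∈ Q n}.Finite} = volume X := by
  have hint : ∀ x ∈ X, ∀ n, IsNondegenerateInterval (D n x) := hDint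
  have hcell : ∀ n, IsCellMap X (D n) := fun n => isCellMap_of_isNondegenerateInterval
    (fun x hx => hint x hx n) (fun x hx => hDmem x hx n) fun x hx y hy => hDdisj x hx y hy n
  have hgood := ae_all_iff.2 fun M : ℕ =>
    ae_finite_setOf_mem_of_tsum_cellRatio_le hX hcell hint hDconv Q (ENNReal.natCast_ne_top M)
  have hfinite : ∀ᵐ x ∂volume.restrict X, {n | x ∈ Q n}.Finite := by
    filter_upwards [hsum, ae_restrict_mem hX, ae_restrict_of_ae hgood] with x hx hxX hxgood
    obtain ⟨M, hM⟩ := ENNReal.exists_nat_gt <| tsum_cellRatio_ne_top hxX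
      (fun n => (hint x hxX n).volume_pos.ne') (fun n => (hint x hxX n).volume_ne_top) hx
    exact hxgood M hxX hM.le
  have := measure_congr (ae_eq_univ.2 hfinite)
  rwa [Measure.restrict_apply' hX, Measure.restrict_apply_univ, inter_comm] at this

/-- The measure-theoretical lemma: if the relative measures `q_n(x)` of `Q_n` in the
nested intervals `D_n(x)` are summable for a.e. `x ∈ X`, then almost every `x ∈ X`
belongs to at most finitely many `Q_n`. -/
theorem measure_theoretical_lemma (X : Set ℝ) (hX : MeasurableSet X)
    (D : ℕ → ℝ → Set ℝ)
    (hDint : ∀ x ∈ X, ∀ n, ∃ u w : ℝ, u < w ∧ Ioo u w ⊆ D n x ∧ D n x ⊆ Icc u w)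
    (hDmem : ∀ x ∈ X, ∀ n, x ∈ D n x)
    (hDnest : ∀ x ∈ X, ∀ n, D (n + 1) x ⊆ D n x)
    (hDconv : ∀ x ∈ X, Tendsto (fun n => volume (D n x)) atTop (𝓝 0))
    (hDdisj : ∀ x₁ ∈ X, ∀ x₂ ∈ X, ∀ n, D n x₁ = D n x₂ ∨ Disjoint (D n x₁) (D n x₂))
    (Q : ℕ → Set ℝ) (hQ : ∀ n, MeasurableSet (Q n))
    (hsum : ∀ᵐ x ∂(volume.restrict X),
      Summable (fun n => (volume (Q n ∩ D n x)).toReal / (volume (D n x)).toReal)) :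
    volume {x | x ∈ X ∧ {n : ℕ | x ∈ Q n}.Finite} = volume X :=
  measure_theoretical_lemma_general X hX D hDint hDmem hDconv hDdisj Q hsum
end

section
/- Fix k ≥ 1 and define the k-quasisymmetric capacity of a set X in a bounded interval I by p_k(X|I) = sup_h |h(X ∩ I)|/|h(I)|, the supremum over all homeomorphisms h of ℝ quasisymmetric with constant k. If {I^j} is a (finite or countable) family of pairwise disjoint subintervals of I and X ⊆ ∪_j I^j, then p_k(X|I) ≤ p_k(∪_j I^j | I) · sup_j p_k(X|I^j). -/
open Set Filter MeasureTheory Topology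

noncomputable section

/-- `h` is a quasisymmetric homeomorphism of `ℝ` with constant `k`. -/
def QSHomeo (k : ℝ) (h : ℝ → ℝ) : Prop :=
  IsHomeomorph h ∧ ∀ x t : ℝ, 0 < t →
    1 / k ≤ (h (x + t) - h x) / (h x - h (x - t)) ∧
      (h (x + t) - h x) / (h x - h (x - t)) ≤ k

/-- The `k`-quasisymmetric capacity of `X` in `I`:
`p_k(X|I) = sup_h |h(X ∩ I)| / |h(I)|` over quasisymmetric homeomorphisms with
constant `k`. -/
def qsCap (k : ℝ) (X I : Set ℝ) : ℝ :=
  ⨆ h ∈ {h : ℝ → ℝ | QSHomeo k h},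
    (volume (h '' (X ∩ I))).toReal / (volume (h '' I)).toReal

/-! For bounded `I`, `p_k(X|I) ≤ c` says that `|h(X ∩ I)| ≤ c |h(I)|` for every competitor `h`.
Fix `h`; it maps the disjoint intervals `Jⱼ` onto disjoint intervals, so with
`S = supⱼ p_k(X|Jⱼ)` and `C = p_k(⋃ⱼ Jⱼ|I)` we get
`|h(X)| ≤ ∑ⱼ |h(X ∩ Jⱼ)| ≤ S ∑ⱼ |h(Jⱼ)| = S |h(⋃ⱼ Jⱼ)| ≤ S C |h(I)|`. -/

open scoped ENNReal

lemma toReal_div_toReal_le_iff {a b : ℝ≥0∞} {c : ℝ} (hab : a ≤ b) (hb : b ≠ ∞) (hc : 0 ≤ c) :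
    a.toReal / b.toReal ≤ c ↔ a ≤ ENNReal.ofReal c * b := by
  rcases eq_or_ne b 0 with rfl | hb₀
  · simp [nonpos_iff_eq_zero.mp hab, hc]
  have hb_pos : 0 < b.toReal := ENNReal.toReal_pos hb₀ hb
  rw [div_le_iff₀ hb_pos, ← ENNReal.toReal_ofReal hc, ← ENNReal.toReal_mul,
    ENNReal.toReal_ofReal hc, ENNReal.toReal_le_toReal (ne_top_of_le_ne_top hb hab)
      (ENNReal.mul_ne_top ENNReal.ofReal_ne_top hb)]

lemma toReal_div_toReal_le_one {a b : ℝ≥0∞} (hab : a ≤ b) : a.toReal / b.toReal ≤ 1 := by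
  rcases eq_or_ne b ∞ with rfl | hb
  · simp
  · exact div_le_one_of_le₀ (ENNReal.toReal_mono hb hab) ENNReal.toReal_nonneg

lemma measure_image_ne_top_of_isBounded {α β : Type*} [PseudoMetricSpace α] [ProperSpace α]
    [TopologicalSpace β] [MeasurableSpace β] {μ : Measure β} [IsFiniteMeasureOnCompacts μ]
    {h : α → β} (hc : Continuous h) {s : Set α} (hs : Bornology.IsBounded s) :
    μ (h '' s) ≠ ∞ :=
  ne_top_of_le_ne_top ((hs.isCompact_closure.image hc).measure_ne_top)
    (measure_mono (image_mono subset_closure))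

lemma measure_image_iUnion_of_ordConnected {ι : Type*} [Countable ι] {μ : Measure ℝ}
    {h : ℝ → ℝ} (hc : Continuous h) (hinj : Function.Injective h) {J : ι → Set ℝ}
    (hJ : ∀ j, (J j).OrdConnected) (hdisj : Pairwise (Function.onFun Disjoint J)) :
    μ (h '' ⋃ j, J j) = ∑' j, μ (h '' J j) := by
  rw [image_iUnion]
  refine measure_iUnion (fun i j hij => disjoint_image_of_injective hinj (hdisj hij))
    fun j => ?_
  exact ((hJ j).isPreconnected.image h hc.continuousOn).ordConnected.measurableSet

section qsCap

variable {k : ℝ}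

lemma qsCap_nonneg (k : ℝ) (X I : Set ℝ) : 0 ≤ qsCap k X I :=
  Real.iSup_nonneg fun _ => Real.iSup_nonneg fun _ => by positivity

lemma iSup_qsHomeo_ratio_le_one (k : ℝ) (X I : Set ℝ) (h : ℝ → ℝ) :
    ⨆ _ : QSHomeo k h, (volume (h '' (X ∩ I))).toReal / (volume (h '' I)).toReal ≤ 1 :=
  Real.iSup_le (fun _ => toReal_div_toReal_le_one (measure_mono (image_mono inter_subset_right)))
    zero_le_one

lemma qsCap_le_one (k : ℝ) (X I : Set ℝ) : qsCap k X I ≤ 1 :=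
  Real.iSup_le (iSup_qsHomeo_ratio_le_one k X I) zero_le_one

lemma qsCap_le_iff {X I : Set ℝ} (hI : Bornology.IsBounded I) {c : ℝ} (hc : 0 ≤ c) :
    qsCap k X I ≤ c ↔
      ∀ h, QSHomeo k h → volume (h '' (X ∩ I)) ≤ ENNReal.ofReal c * volume (h '' I) := by
  have hratio : ∀ h, QSHomeo k h →
      ((volume (h '' (X ∩ I))).toReal / (volume (h '' I)).toReal ≤ c ↔
        volume (h '' (X ∩ I)) ≤ ENNReal.ofReal c * volume (h '' I)) := fun h hq =>
    toReal_div_toReal_le_iff (measure_mono (image_mono inter_subset_right))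
      (measure_image_ne_top_of_isBounded hq.1.continuous hI) hc
  refine ⟨fun hle h hq => (hratio h hq).mp ?_, fun hle =>
    Real.iSup_le (fun h => Real.iSup_le (fun hq => (hratio h hq).mpr (hle h hq)) hc) hc⟩
  have hbdd : BddAbove (range fun h : ℝ → ℝ => ⨆ _ : QSHomeo k h,
      (volume (h '' (X ∩ I))).toReal / (volume (h '' I)).toReal) :=
    ⟨1, forall_mem_range.mpr (iSup_qsHomeo_ratio_le_one k X I)⟩
  have := le_ciSup hbdd h
  rw [ciSup_pos hq] at this
  exact this.trans hle

lemma volume_image_inter_le_qsCap_mul {X I : Set ℝ} (hI : Bornology.IsBounded I) {h : ℝ → ℝ}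
    (hq : QSHomeo k h) :
    volume (h '' (X ∩ I)) ≤ ENNReal.ofReal (qsCap k X I) * volume (h '' I) :=
  (qsCap_le_iff hI (qsCap_nonneg k X I)).mp le_rfl h hq

lemma volume_image_le_iSup_qsCap_mul {ι : Type*} [Countable ι] {J : ι → Set ℝ}
    (hJ : ∀ j, (J j).OrdConnected) (hJb : ∀ j, Bornology.IsBounded (J j))
    (hdisj : Pairwise (Function.onFun Disjoint J)) {X : Set ℝ} (hX : X ⊆ ⋃ j, J j)
    {h : ℝ → ℝ} (hq : QSHomeo k h) :
    volume (h '' X) ≤ ENNReal.ofReal (⨆ j, qsCap k X (J j)) * volume (h '' ⋃ j, J j) := by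
  have hS : ∀ j, qsCap k X (J j) ≤ ⨆ j, qsCap k X (J j) :=
    le_ciSup ⟨1, forall_mem_range.mpr fun j => qsCap_le_one k X (J j)⟩
  calc volume (h '' X)
      = volume (⋃ j, h '' (X ∩ J j)) := by
        rw [← image_iUnion, ← inter_iUnion, inter_eq_left.mpr hX]
    _ ≤ ∑' j, volume (h '' (X ∩ J j)) := measure_iUnion_le _
    _ ≤ ∑' j, ENNReal.ofReal (⨆ j, qsCap k X (J j)) * volume (h '' J j) :=
        ENNReal.tsum_le_tsum fun j => (volume_image_inter_le_qsCap_mul (hJb j) hq).trans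
          (by gcongr; exact hS j)
    _ = ENNReal.ofReal (⨆ j, qsCap k X (J j)) * volume (h '' ⋃ j, J j) := by
        rw [ENNReal.tsum_mul_left, measure_image_iUnion_of_ordConnected hq.1.continuous
          hq.1.bijective.1 hJ hdisj]

end qsCap

theorem qsCap_tree_decomposition_general (k : ℝ)
    (I : Set ℝ) (u v : ℝ) (hI₂ : I ⊆ Icc u v)
    {ι : Type*} [Countable ι] (J : ι → Set ℝ)
    (hJ : ∀ j, (J j).OrdConnected ∧ J j ⊆ I)
    (hdisj : Pairwise (Function.onFun Disjoint J))
    (X : Set ℝ) (hX : X ⊆ ⋃ j, J j) :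
    qsCap k X I ≤ qsCap k (⋃ j, J j) I * ⨆ j, qsCap k X (J j) := by
  have hIb : Bornology.IsBounded I := (Metric.isBounded_Icc u v).subset hI₂
  have hUI : (⋃ j, J j) ⊆ I := iUnion_subset fun j => (hJ j).2
  have hS₀ : 0 ≤ ⨆ j, qsCap k X (J j) := Real.iSup_nonneg fun j => qsCap_nonneg k X (J j)
  rw [qsCap_le_iff hIb (mul_nonneg (qsCap_nonneg _ _ _) hS₀)]
  intro h hq
  have hC := volume_image_inter_le_qsCap_mul (X := ⋃ j, J j) hIb hq
  rw [inter_eq_left.mpr hUI] at hC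
  calc volume (h '' (X ∩ I))
      = volume (h '' X) := by rw [inter_eq_left.mpr (hX.trans hUI)]
    _ ≤ ENNReal.ofReal (⨆ j, qsCap k X (J j)) * volume (h '' ⋃ j, J j) :=
        volume_image_le_iSup_qsCap_mul (fun j => (hJ j).1) (fun j => hIb.subset (hJ j).2)
          hdisj hX hq
    _ ≤ ENNReal.ofReal (⨆ j, qsCap k X (J j)) *
          (ENNReal.ofReal (qsCap k (⋃ j, J j) I) * volume (h '' I)) := by gcongr
    _ = ENNReal.ofReal (qsCap k (⋃ j, J j) I * ⨆ j, qsCap k X (J j)) * volume (h '' I) := by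
        rw [ENNReal.ofReal_mul (qsCap_nonneg _ _ _)]
        ring

/-- Tree decomposition inequality for quasisymmetric capacities. -/
theorem qsCap_tree_decomposition (k : ℝ) (hk : 1 ≤ k)
    (I : Set ℝ) (u v : ℝ) (huv : u < v) (hI₁ : Ioo u v ⊆ I) (hI₂ : I ⊆ Icc u v)
    {ι : Type*} [Countable ι] (J : ι → Set ℝ)
    (hJ : ∀ j, (J j).OrdConnected ∧ J j ⊆ I)
    (hdisj : Pairwise (Function.onFun Disjoint J))
    (X : Set ℝ) (hX : X ⊆ ⋃ j, J j) :
    qsCap k X I ≤ qsCap k (⋃ j, J j) I * ⨆ j, qsCap k X (J j) :=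
  qsCap_tree_decomposition_general k I u v hI₂ J hJ hdisj X hX

end
end
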